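/- (Larson–Sweedler theorem, integral version.) Let A be an associative unital algebra over ℂ with a full comultiplication Δ. If there exist a faithful left integral and a faithful right integral on A, then the four linear maps on A ⊗ A determined by a ⊗ b ↦ Δ(a)(1 ⊗ b), a ⊗ b ↦ Δ(a)(b ⊗ 1), a ⊗ b ↦ (a ⊗ 1)Δ(b), and a ⊗ b ↦ (1 ⊗ a)Δ(b) are all bijective, and (A, Δ) is a Hopf algebra: there exist a linear map ε : A → ℂ and a linear map S : A → A such that (ε ⊗ id)(Δ(a)) = a, (id ⊗ ε)(Δ(a)) = a, m(S ⊗ id)(Δ(a)) = ε(a)·1 and m(id ⊗ S)(Δ(a)) = ε(a)·1 for all a ∈ A, where m denotes the multiplication map A ⊗ A → A. -/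

import Mathlib

/-!
Faithfulness makes the four maps injective: for instance `(ψ ⊗ id)(Δ(d) T₁(z))` equals
`(ψ ⊗ id)((d ⊗ 1) z)` by right invariance, and the functionals `ψ(d ·)` separate the points of `A`.
For surjectivity, coassociativity and invariance give `T₁(twistR z) = (id ⊗ φ)(T₁ z) ⊗ 1`. Every
slice of a tensor is also a slice by some `φ(· b)`, so by fullness the elements `(id ⊗ φ)(T₁ z)`
exhaust `A`, and right multiplication by `1 ⊗ c` fills `A ⊗ A`; `T₂` is symmetric, and `T₁'`,
`T₂'` are `T₁`, `T₂` for the co-opposite comultiplication. The counit is defined by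
`ε((ψ ⊗ id)(T₂ z)) = ψ(m z)`, a left antipode by `S(a) = (ε ⊗ id)(T₁⁻¹(a ⊗ 1))` and a right one
by `S'(a) = (id ⊗ ε)(T₂⁻¹(1 ⊗ a))`.
-/

open TensorProduct

noncomputable section

variable {A : Type*} [Ring A] [Algebra ℂ A]

/-- The slice map `id ⊗ ω : A ⊗ A → A`. -/
def sliceR (ω : A →ₗ[ℂ] ℂ) : A ⊗[ℂ] A →ₗ[ℂ] A :=
  (TensorProduct.rid ℂ A).toLinearMap ∘ₗ TensorProduct.map LinearMap.id ω

/-- The slice map `ω ⊗ id : A ⊗ A → A`. -/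
def sliceL (ω : A →ₗ[ℂ] ℂ) : A ⊗[ℂ] A →ₗ[ℂ] A :=
  (TensorProduct.lid ℂ A).toLinearMap ∘ₗ TensorProduct.map ω LinearMap.id

/-- Coassociativity of a comultiplication `Δ : A → A ⊗ A`:
`(Δ ⊗ id) ∘ Δ = (id ⊗ Δ) ∘ Δ` (up to the associator). -/
def IsCoassoc (Δ : A →ₐ[ℂ] A ⊗[ℂ] A) : Prop :=
  ∀ a : A,
    TensorProduct.assoc ℂ A A A (TensorProduct.map Δ.toLinearMap LinearMap.id (Δ a)) =
      TensorProduct.map LinearMap.id Δ.toLinearMap (Δ a)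

/-- A left integral: a nonzero functional with `(id ⊗ φ)(Δ a) = φ(a)·1` for all `a`. -/
def IsLeftIntegral (Δ : A →ₐ[ℂ] A ⊗[ℂ] A) (φ : A →ₗ[ℂ] ℂ) : Prop :=
  φ ≠ 0 ∧ ∀ a : A, sliceR φ (Δ a) = φ a • (1 : A)

/-- A right integral: a nonzero functional with `(ψ ⊗ id)(Δ a) = ψ(a)·1` for all `a`. -/
def IsRightIntegral (Δ : A →ₐ[ℂ] A ⊗[ℂ] A) (ψ : A →ₗ[ℂ] ℂ) : Prop :=
  ψ ≠ 0 ∧ ∀ a : A, sliceL ψ (Δ a) = ψ a • (1 : A)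

/-- A faithful functional: the bilinear form `(a, b) ↦ ω(ab)` is non-degenerate. -/
def IsFaithful (ω : A →ₗ[ℂ] ℂ) : Prop :=
  (∀ b : A, (∀ a : A, ω (a * b) = 0) → b = 0) ∧
  (∀ b : A, (∀ a : A, ω (b * a) = 0) → b = 0)

/-- The left leg of an element `x ∈ A ⊗ A`: the span of `{(id ⊗ ω)(x) : ω ∈ A*}`. -/
def leftLegOf (x : A ⊗[ℂ] A) : Submodule ℂ A :=
  Submodule.span ℂ {y : A | ∃ ω : A →ₗ[ℂ] ℂ, y = sliceR ω x}

/-- The right leg of an element `x ∈ A ⊗ A`: the span of `{(ω ⊗ id)(x) : ω ∈ A*}`. -/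
def rightLegOf (x : A ⊗[ℂ] A) : Submodule ℂ A :=
  Submodule.span ℂ {y : A | ∃ ω : A →ₗ[ℂ] ℂ, y = sliceL ω x}

/-- The left leg of `Δ`: the span of `{(id ⊗ ω)(Δ a) : a ∈ A, ω ∈ A*}`. -/
def leftLeg (Δ : A →ₐ[ℂ] A ⊗[ℂ] A) : Submodule ℂ A :=
  Submodule.span ℂ {y : A | ∃ (a : A) (ω : A →ₗ[ℂ] ℂ), y = sliceR ω (Δ a)}

/-- The right leg of `Δ`: the span of `{(ω ⊗ id)(Δ a) : a ∈ A, ω ∈ A*}`. -/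
def rightLeg (Δ : A →ₐ[ℂ] A ⊗[ℂ] A) : Submodule ℂ A :=
  Submodule.span ℂ {y : A | ∃ (a : A) (ω : A →ₗ[ℂ] ℂ), y = sliceL ω (Δ a)}

/-- A comultiplication is full if both of its legs are all of `A`. -/
def IsFull (Δ : A →ₐ[ℂ] A ⊗[ℂ] A) : Prop :=
  leftLeg Δ = ⊤ ∧ rightLeg Δ = ⊤

/-- The linear map `T₁` with `T₁ (a ⊗ b) = Δ(a) * (1 ⊗ b)`. -/
def T1 (Δ : A →ₐ[ℂ] A ⊗[ℂ] A) : A ⊗[ℂ] A →ₗ[ℂ] A ⊗[ℂ] A :=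
  LinearMap.mul' ℂ (A ⊗[ℂ] A) ∘ₗ
    TensorProduct.map Δ.toLinearMap (TensorProduct.mk ℂ A A 1)

/-- The linear map `T₁'` with `T₁' (a ⊗ b) = Δ(a) * (b ⊗ 1)`. -/
def T1' (Δ : A →ₐ[ℂ] A ⊗[ℂ] A) : A ⊗[ℂ] A →ₗ[ℂ] A ⊗[ℂ] A :=
  LinearMap.mul' ℂ (A ⊗[ℂ] A) ∘ₗ
    TensorProduct.map Δ.toLinearMap ((TensorProduct.mk ℂ A A).flip 1)

/-- The linear map `T₂` with `T₂ (a ⊗ b) = (a ⊗ 1) * Δ(b)`. -/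
def T2 (Δ : A →ₐ[ℂ] A ⊗[ℂ] A) : A ⊗[ℂ] A →ₗ[ℂ] A ⊗[ℂ] A :=
  LinearMap.mul' ℂ (A ⊗[ℂ] A) ∘ₗ
    TensorProduct.map ((TensorProduct.mk ℂ A A).flip 1) Δ.toLinearMap

/-- The linear map `T₂'` with `T₂' (a ⊗ b) = (1 ⊗ a) * Δ(b)`. -/
def T2' (Δ : A →ₐ[ℂ] A ⊗[ℂ] A) : A ⊗[ℂ] A →ₗ[ℂ] A ⊗[ℂ] A :=
  LinearMap.mul' ℂ (A ⊗[ℂ] A) ∘ₗ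
    TensorProduct.map (TensorProduct.mk ℂ A A 1) Δ.toLinearMap

/-- A left cointegral: a nonzero element `h` with `Δ(a)(1 ⊗ h) = a ⊗ h` for all `a`. -/
def IsLeftCointegral (Δ : A →ₐ[ℂ] A ⊗[ℂ] A) (h : A) : Prop :=
  h ≠ 0 ∧ ∀ a : A, Δ a * ((1 : A) ⊗ₜ[ℂ] h) = a ⊗ₜ[ℂ] h

/-- A right cointegral: a nonzero element `k` with `(k ⊗ 1)Δ(a) = k ⊗ a` for all `a`. -/
def IsRightCointegral (Δ : A →ₐ[ℂ] A ⊗[ℂ] A) (k : A) : Prop :=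
  k ≠ 0 ∧ ∀ a : A, (k ⊗ₜ[ℂ] (1 : A)) * Δ a = k ⊗ₜ[ℂ] a

/-- `Δ₁₃(a) = (1 ⊗ σ)(Δ(a) ⊗ 1)`, viewed in `A ⊗ (A ⊗ A)`. -/
def delta13 (Δ : A →ₐ[ℂ] A ⊗[ℂ] A) (a : A) : A ⊗[ℂ] (A ⊗[ℂ] A) :=
  TensorProduct.map LinearMap.id (TensorProduct.comm ℂ A A).toLinearMap
    (TensorProduct.assoc ℂ A A A (Δ a ⊗ₜ[ℂ] (1 : A)))

section Slices

@[simp]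
lemma sliceR_tmul (ω : A →ₗ[ℂ] ℂ) (a b : A) : sliceR ω (a ⊗ₜ b) = ω b • a := by
  simp [sliceR]

@[simp]
lemma sliceL_tmul (ω : A →ₗ[ℂ] ℂ) (a b : A) : sliceL ω (a ⊗ₜ b) = ω a • b := by
  simp [sliceL]

@[simp]
lemma sliceR_comm (ω : A →ₗ[ℂ] ℂ) (x : A ⊗[ℂ] A) :
    sliceR ω (TensorProduct.comm ℂ A A x) = sliceL ω x := by
  induction x using TensorProduct.induction_on with
  | zero => simp
  | tmul a b => simp
  | add x y hx hy => simp [hx, hy]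

@[simp]
lemma sliceL_comm (ω : A →ₗ[ℂ] ℂ) (x : A ⊗[ℂ] A) :
    sliceL ω (TensorProduct.comm ℂ A A x) = sliceR ω x := by
  simpa using (sliceR_comm ω (TensorProduct.comm ℂ A A x)).symm

lemma apply_sliceR (f g : A →ₗ[ℂ] ℂ) (x : A ⊗[ℂ] A) : f (sliceR g x) = g (sliceL f x) := by
  induction x using TensorProduct.induction_on with
  | zero => simp
  | tmul a b => simp [mul_comm]
  | add x y hx hy => simp [hx, hy]

lemma sliceR_mul_one_tmul (φ : A →ₗ[ℂ] ℂ) (x : A ⊗[ℂ] A) (b : A) :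
    sliceR φ (x * (1 ⊗ₜ b)) = sliceR (φ ∘ₗ LinearMap.mulRight ℂ b) x := by
  induction x using TensorProduct.induction_on with
  | zero => simp
  | tmul u v => simp [Algebra.TensorProduct.tmul_mul_tmul]
  | add x y hx hy => simp [add_mul, hx, hy]

lemma sliceL_tmul_one_mul (ψ : A →ₗ[ℂ] ℂ) (d : A) (x : A ⊗[ℂ] A) :
    sliceL ψ ((d ⊗ₜ 1) * x) = sliceL (ψ ∘ₗ LinearMap.mulLeft ℂ d) x := by
  induction x using TensorProduct.induction_on with
  | zero => simp
  | tmul u v => simp [Algebra.TensorProduct.tmul_mul_tmul]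
  | add x y hx hy => simp [mul_add, hx, hy]

lemma sliceL_mul_one_tmul (ψ : A →ₗ[ℂ] ℂ) (x : A ⊗[ℂ] A) (b : A) :
    sliceL ψ (x * (1 ⊗ₜ b)) = sliceL ψ x * b := by
  induction x using TensorProduct.induction_on with
  | zero => simp
  | tmul u v => simp [Algebra.TensorProduct.tmul_mul_tmul]
  | add x y hx hy => simp [add_mul, hx, hy]

lemma sliceR_tmul_one_mul (φ : A →ₗ[ℂ] ℂ) (b : A) (x : A ⊗[ℂ] A) :
    sliceR φ ((b ⊗ₜ 1) * x) = b * sliceR φ x := by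
  induction x using TensorProduct.induction_on with
  | zero => simp
  | tmul u v => simp [Algebra.TensorProduct.tmul_mul_tmul]
  | add x y hx hy => simp [mul_add, hx, hy]

lemma eq_zero_of_forall_sliceR_eq_zero {x : A ⊗[ℂ] A} (h : ∀ ω, sliceR ω x = 0) : x = 0 := by
  classical
  let 𝒞 := Module.Basis.ofVectorSpace ℂ A
  have hcoord : ∀ (y : A ⊗[ℂ] A) i, equivFinsuppOfBasisRight 𝒞 y i = sliceR (𝒞.coord i) y := by
    intro y i
    induction y using TensorProduct.induction_on with
    | zero => simp
    | tmul u v => simp [Module.Basis.coord]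
    | add y z hy hz => simp [hy, hz]
  apply (equivFinsuppOfBasisRight 𝒞).injective
  ext i
  simp [hcoord, h]

lemma eq_zero_of_forall_sliceL_eq_zero {x : A ⊗[ℂ] A} (h : ∀ ω, sliceL ω x = 0) : x = 0 := by
  have : TensorProduct.comm ℂ A A x = 0 := eq_zero_of_forall_sliceR_eq_zero (by simpa using h)
  simpa using this

/-- Slices of a fixed tensor only see finitely many vectors, so a separating family of functionals
produces every slice. -/
lemma exists_sliceR_eq {M : Type*} [AddCommGroup M] [Module ℂ M] (Θ : M →ₗ[ℂ] Module.Dual ℂ A)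
    (hΘ : ∀ v, (∀ m, Θ m v = 0) → v = 0) (ω : A →ₗ[ℂ] ℂ) (w : A ⊗[ℂ] A) :
    ∃ m, sliceR ω w = sliceR (Θ m) w := by
  obtain ⟨N, hN, hw⟩ := exists_finite_submodule_right_of_setFinite {w} (Set.finite_singleton w)
  obtain ⟨w', rfl⟩ := hw rfl
  set W := LinearMap.range (N.subtype.dualMap ∘ₗ Θ)
  have hW : W = ⊤ := by
    have hco : W.dualCoannihilator = ⊥ := by
      refine (Submodule.eq_bot_iff _).mpr fun v hv ↦ Subtype.ext (hΘ v fun m ↦ ?_)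
      exact (Submodule.mem_dualCoannihilator v).mp hv _ ⟨m, rfl⟩
    rw [← Subspace.dualCoannihilator_dualAnnihilator_eq (W := W), hco,
      Submodule.dualAnnihilator_bot]
  obtain ⟨m, hm⟩ : N.subtype.dualMap ω ∈ W := hW ▸ Submodule.mem_top
  refine ⟨m, ?_⟩
  have hslice : ∀ ω' : Module.Dual ℂ A, sliceR ω' (N.subtype.lTensor A w') =
      TensorProduct.rid ℂ A (LinearMap.lTensor A (N.subtype.dualMap ω') w') := by
    intro ω'
    induction w' using TensorProduct.induction_on with
    | zero => simp
    | tmul u v => simp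
    | add y z hy hz => simp [hy, hz]
  simp only [hslice, ← hm, LinearMap.comp_apply]

end Slices

namespace IsFaithful

variable {φ : A →ₗ[ℂ] ℂ}

lemma exists_sliceR_eq_sliceR_mul (hφ : IsFaithful φ) (ω : A →ₗ[ℂ] ℂ) (w : A ⊗[ℂ] A) :
    ∃ b, sliceR ω w = sliceR φ (w * (1 ⊗ₜ b)) := by
  obtain ⟨b, hb⟩ := exists_sliceR_eq ((LinearMap.mul ℂ A).flip.compr₂ φ) hφ.2 ω w
  exact ⟨b, by rw [hb, sliceR_mul_one_tmul]; rfl⟩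

lemma exists_sliceL_eq_sliceL_mul (hφ : IsFaithful φ) (ω : A →ₗ[ℂ] ℂ) (w : A ⊗[ℂ] A) :
    ∃ d, sliceL ω w = sliceL φ ((d ⊗ₜ 1) * w) := by
  obtain ⟨d, hd⟩ := exists_sliceR_eq ((LinearMap.mul ℂ A).compr₂ φ) hφ.1 ω
    (TensorProduct.comm ℂ A A w)
  refine ⟨d, ?_⟩
  rw [← sliceR_comm, hd, sliceR_comm, sliceL_tmul_one_mul]
  rfl

lemma eq_zero_of_sliceR_mul_eq_zero (hφ : IsFaithful φ) {z : A ⊗[ℂ] A}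
    (h : ∀ b, sliceR φ (z * (1 ⊗ₜ b)) = 0) : z = 0 :=
  eq_zero_of_forall_sliceR_eq_zero fun ω ↦ by
    obtain ⟨b, hb⟩ := hφ.exists_sliceR_eq_sliceR_mul ω z
    rw [hb, h]

lemma eq_zero_of_sliceL_mul_eq_zero (hφ : IsFaithful φ) {z : A ⊗[ℂ] A}
    (h : ∀ d, sliceL φ ((d ⊗ₜ 1) * z) = 0) : z = 0 :=
  eq_zero_of_forall_sliceL_eq_zero fun ω ↦ by
    obtain ⟨d, hd⟩ := hφ.exists_sliceL_eq_sliceL_mul ω z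
    rw [hd, h]

end IsFaithful

section Comultiplication

variable (Δ : A →ₐ[ℂ] A ⊗[ℂ] A)

@[simp]
lemma T1_tmul (a b : A) : T1 Δ (a ⊗ₜ b) = Δ a * (1 ⊗ₜ b) := by
  simp [T1]

@[simp]
lemma T2_tmul (a b : A) : T2 Δ (a ⊗ₜ b) = (a ⊗ₜ 1) * Δ b := by
  simp [T2]

@[simp]
lemma T1'_tmul (a b : A) : T1' Δ (a ⊗ₜ b) = Δ a * (b ⊗ₜ 1) := by
  simp [T1']

@[simp]
lemma T2'_tmul (a b : A) : T2' Δ (a ⊗ₜ b) = (1 ⊗ₜ a) * Δ b := by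
  simp [T2']

lemma T1_mul_one_tmul (z : A ⊗[ℂ] A) (c : A) : T1 Δ (z * (1 ⊗ₜ c)) = T1 Δ z * (1 ⊗ₜ c) := by
  induction z using TensorProduct.induction_on with
  | zero => simp
  | tmul a b => simp [Algebra.TensorProduct.tmul_mul_tmul, mul_assoc]
  | add y z hy hz => simp [add_mul, hy, hz]

lemma T2_tmul_one_mul (z : A ⊗[ℂ] A) (c : A) : T2 Δ ((c ⊗ₜ 1) * z) = (c ⊗ₜ 1) * T2 Δ z := by
  induction z using TensorProduct.induction_on with
  | zero => simp
  | tmul a b => simp [← mul_assoc, Algebra.TensorProduct.tmul_mul_tmul]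
  | add y z hy hz => simp [mul_add, hy, hz]

lemma map_id_comul_mul (Y Y' : A ⊗[ℂ] A) :
    map LinearMap.id Δ.toLinearMap (Y * Y') =
      map LinearMap.id Δ.toLinearMap Y * map LinearMap.id Δ.toLinearMap Y' :=
  map_mul (Algebra.TensorProduct.map (AlgHom.id ℂ A) Δ) Y Y'

lemma map_comul_id_mul (Y Y' : A ⊗[ℂ] A) :
    map Δ.toLinearMap LinearMap.id (Y * Y') =
      map Δ.toLinearMap LinearMap.id Y * map Δ.toLinearMap LinearMap.id Y' :=
  map_mul (Algebra.TensorProduct.map Δ (AlgHom.id ℂ A)) Y Y'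

lemma assoc_mul (X X' : (A ⊗[ℂ] A) ⊗[ℂ] A) :
    TensorProduct.assoc ℂ A A A (X * X') =
      TensorProduct.assoc ℂ A A A X * TensorProduct.assoc ℂ A A A X' :=
  map_mul (Algebra.TensorProduct.assoc ℂ ℂ ℂ A A A) X X'

lemma assoc_symm_mul (X X' : A ⊗[ℂ] (A ⊗[ℂ] A)) :
    (TensorProduct.assoc ℂ A A A).symm (X * X') =
      (TensorProduct.assoc ℂ A A A).symm X * (TensorProduct.assoc ℂ A A A).symm X' :=
  map_mul (Algebra.TensorProduct.assoc ℂ ℂ ℂ A A A).symm X X'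

lemma IsCoassoc.map_comul_id {Δ} (hΔ : IsCoassoc Δ) (a : A) :
    map Δ.toLinearMap LinearMap.id (Δ a) =
      (TensorProduct.assoc ℂ A A A).symm (map LinearMap.id Δ.toLinearMap (Δ a)) := by
  rw [LinearEquiv.eq_symm_apply, hΔ a]

end Comultiplication

section TripleSlices

variable {Δ : A →ₐ[ℂ] A ⊗[ℂ] A}

lemma lTensor_sliceR_assoc (φ : A →ₗ[ℂ] ℂ) (X : A ⊗[ℂ] A) (c : A) :
    (sliceR φ).lTensor A (TensorProduct.assoc ℂ A A A (X ⊗ₜ c)) = φ c • X := by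
  induction X using TensorProduct.induction_on with
  | zero => simp
  | tmul u v => simp [TensorProduct.tmul_smul]
  | add y z hy hz => simp [add_tmul, hy, hz]

lemma rTensor_sliceL_assoc_symm (ψ : A →ₗ[ℂ] ℂ) (c : A) (Y : A ⊗[ℂ] A) :
    (sliceL ψ).rTensor A ((TensorProduct.assoc ℂ A A A).symm (c ⊗ₜ Y)) = ψ c • Y := by
  induction Y using TensorProduct.induction_on with
  | zero => simp
  | tmul u v => simp [TensorProduct.smul_tmul']
  | add y z hy hz => simp [tmul_add, hy, hz]

lemma IsLeftIntegral.lTensor_sliceR_map {φ : A →ₗ[ℂ] ℂ} (hφ : IsLeftIntegral Δ φ)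
    (Y : A ⊗[ℂ] A) :
    (sliceR φ).lTensor A (map LinearMap.id Δ.toLinearMap Y) = sliceR φ Y ⊗ₜ 1 := by
  induction Y using TensorProduct.induction_on with
  | zero => simp
  | tmul u v => simp [hφ.2, TensorProduct.smul_tmul']
  | add y z hy hz => simp [add_tmul, hy, hz]

lemma IsRightIntegral.rTensor_sliceL_map {ψ : A →ₗ[ℂ] ℂ} (hψ : IsRightIntegral Δ ψ)
    (Y : A ⊗[ℂ] A) :
    (sliceL ψ).rTensor A (map Δ.toLinearMap LinearMap.id Y) = 1 ⊗ₜ sliceL ψ Y := by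
  induction Y using TensorProduct.induction_on with
  | zero => simp
  | tmul u v => simp [hψ.2, TensorProduct.smul_tmul]
  | add y z hy hz => simp [tmul_add, hy, hz]

end TripleSlices

section Twists

variable (Δ : A →ₐ[ℂ] A ⊗[ℂ] A)

/-- `d ⊗ x ↦ ∑ ψ(d₍₁₎ x₍₁₎) d₍₂₎ ⊗ x₍₂₎` in Sweedler notation. -/
def twistL (ψ : A →ₗ[ℂ] ℂ) : A ⊗[ℂ] A →ₗ[ℂ] A ⊗[ℂ] A :=
  (TensorProduct.lid ℂ (A ⊗[ℂ] A)).toLinearMap ∘ₗ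
    (ψ ∘ₗ LinearMap.mul' ℂ A).rTensor (A ⊗[ℂ] A) ∘ₗ
    (tensorTensorTensorComm ℂ A A A A).toLinearMap ∘ₗ map Δ.toLinearMap Δ.toLinearMap

/-- `x ⊗ b ↦ ∑ φ(x₍₂₎ b₍₂₎) x₍₁₎ ⊗ b₍₁₎` in Sweedler notation. -/
def twistR (φ : A →ₗ[ℂ] ℂ) : A ⊗[ℂ] A →ₗ[ℂ] A ⊗[ℂ] A :=
  (TensorProduct.rid ℂ (A ⊗[ℂ] A)).toLinearMap ∘ₗ
    (φ ∘ₗ LinearMap.mul' ℂ A).lTensor (A ⊗[ℂ] A) ∘ₗ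
    (tensorTensorTensorComm ℂ A A A A).toLinearMap ∘ₗ map Δ.toLinearMap Δ.toLinearMap

variable {Δ}

lemma T2_twistL {ψ : A →ₗ[ℂ] ℂ} (hΔ : IsCoassoc Δ) (hψ : IsRightIntegral Δ ψ) (z : A ⊗[ℂ] A) :
    T2 Δ (twistL Δ ψ z) = 1 ⊗ₜ sliceL ψ (T2 Δ z) := by
  have key : ∀ W W' : A ⊗[ℂ] A,
      T2 Δ (TensorProduct.lid ℂ (A ⊗[ℂ] A) ((ψ ∘ₗ LinearMap.mul' ℂ A).rTensor (A ⊗[ℂ] A)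
        (tensorTensorTensorComm ℂ A A A A (W ⊗ₜ W')))) =
      (sliceL ψ).rTensor A ((W ⊗ₜ 1) * (TensorProduct.assoc ℂ A A A).symm
        (map LinearMap.id Δ.toLinearMap W')) := by
    intro W W'
    induction W using TensorProduct.induction_on with
    | zero => simp
    | add y z hy hz => simp [add_tmul, add_mul, hy, hz]
    | tmul r s =>
      induction W' using TensorProduct.induction_on with
      | zero => simp
      | add y z hy hz => simp [tmul_add, mul_add, hy, hz]
      | tmul u v =>
        have hassoc : ((r ⊗ₜ s) ⊗ₜ (1 : A) : (A ⊗[ℂ] A) ⊗[ℂ] A) =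
            (TensorProduct.assoc ℂ A A A).symm (r ⊗ₜ (s ⊗ₜ 1)) := rfl
        rw [hassoc, ← assoc_symm_mul, map_tmul, Algebra.TensorProduct.tmul_mul_tmul,
          rTensor_sliceL_assoc_symm]
        simp
  induction z using TensorProduct.induction_on with
  | zero => simp
  | add y z hy hz => simp [tmul_add, hy, hz]
  | tmul d x =>
    calc T2 Δ (twistL Δ ψ (d ⊗ₜ x))
        = (sliceL ψ).rTensor A ((Δ d ⊗ₜ 1) * (TensorProduct.assoc ℂ A A A).symm
            (map LinearMap.id Δ.toLinearMap (Δ x))) := key _ _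
      _ = (sliceL ψ).rTensor A (map Δ.toLinearMap LinearMap.id ((d ⊗ₜ 1) * Δ x)) := by
          rw [← hΔ.map_comul_id, map_comul_id_mul]
          rfl
      _ = 1 ⊗ₜ sliceL ψ (T2 Δ (d ⊗ₜ x)) := by rw [hψ.rTensor_sliceL_map, T2_tmul]

lemma T1_twistR {φ : A →ₗ[ℂ] ℂ} (hΔ : IsCoassoc Δ) (hφ : IsLeftIntegral Δ φ) (z : A ⊗[ℂ] A) :
    T1 Δ (twistR Δ φ z) = sliceR φ (T1 Δ z) ⊗ₜ 1 := by
  have key : ∀ W W' : A ⊗[ℂ] A,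
      T1 Δ (TensorProduct.rid ℂ (A ⊗[ℂ] A) ((φ ∘ₗ LinearMap.mul' ℂ A).lTensor (A ⊗[ℂ] A)
        (tensorTensorTensorComm ℂ A A A A (W ⊗ₜ W')))) =
      (sliceR φ).lTensor A (TensorProduct.assoc ℂ A A A (map Δ.toLinearMap LinearMap.id W) *
        (1 ⊗ₜ W')) := by
    intro W W'
    induction W using TensorProduct.induction_on with
    | zero => simp
    | add y z hy hz => simp [add_tmul, add_mul, hy, hz]
    | tmul u v =>
      induction W' using TensorProduct.induction_on with
      | zero => simp
      | add y z hy hz => simp [tmul_add, mul_add, hy, hz]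
      | tmul p q =>
        have hassoc : ((1 : A) ⊗ₜ (p ⊗ₜ q) : A ⊗[ℂ] (A ⊗[ℂ] A)) =
            TensorProduct.assoc ℂ A A A ((1 ⊗ₜ p) ⊗ₜ q) := rfl
        rw [hassoc, map_tmul, ← assoc_mul, Algebra.TensorProduct.tmul_mul_tmul,
          lTensor_sliceR_assoc]
        simp
  induction z using TensorProduct.induction_on with
  | zero => simp
  | add y z hy hz => simp [add_tmul, hy, hz]
  | tmul x b =>
    calc T1 Δ (twistR Δ φ (x ⊗ₜ b))
        = (sliceR φ).lTensor A (TensorProduct.assoc ℂ A A A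
            (map Δ.toLinearMap LinearMap.id (Δ x)) * (1 ⊗ₜ Δ b)) := key _ _
      _ = (sliceR φ).lTensor A (map LinearMap.id Δ.toLinearMap (Δ x * (1 ⊗ₜ b))) := by
          rw [hΔ x, map_id_comul_mul, map_tmul]
          simp
      _ = sliceR φ (T1 Δ (x ⊗ₜ b)) ⊗ₜ 1 := by rw [hφ.lTensor_sliceR_map, T1_tmul]

lemma mul'_twistL {ψ : A →ₗ[ℂ] ℂ} (hψ : IsRightIntegral Δ ψ) (z : A ⊗[ℂ] A) :
    LinearMap.mul' ℂ A (twistL Δ ψ z) = ψ (LinearMap.mul' ℂ A z) • 1 := by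
  have key : ∀ W W' : A ⊗[ℂ] A,
      LinearMap.mul' ℂ A (TensorProduct.lid ℂ (A ⊗[ℂ] A)
        ((ψ ∘ₗ LinearMap.mul' ℂ A).rTensor (A ⊗[ℂ] A)
          (tensorTensorTensorComm ℂ A A A A (W ⊗ₜ W')))) = sliceL ψ (W * W') := by
    intro W W'
    induction W using TensorProduct.induction_on with
    | zero => simp
    | add y z hy hz => simp [add_tmul, add_mul, hy, hz]
    | tmul r s =>
      induction W' using TensorProduct.induction_on with
      | zero => simp
      | add y z hy hz => simp [tmul_add, mul_add, hy, hz]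
      | tmul u v => simp [Algebra.TensorProduct.tmul_mul_tmul]
  induction z using TensorProduct.induction_on with
  | zero => simp
  | add y z hy hz => simp [add_smul, hy, hz]
  | tmul d x =>
    calc LinearMap.mul' ℂ A (twistL Δ ψ (d ⊗ₜ x)) = sliceL ψ (Δ d * Δ x) := key _ _
      _ = ψ (LinearMap.mul' ℂ A (d ⊗ₜ x)) • 1 := by rw [← map_mul, hψ.2, LinearMap.mul'_apply]

end Twists

lemma surjective_of_forall_tmul_mem_range {R M N P : Type*} [CommSemiring R] [AddCommMonoid M]
    [Module R M] [AddCommMonoid N] [Module R N] [AddCommMonoid P] [Module R P]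
    (f : M →ₗ[R] N ⊗[R] P)
    (h : ∀ n p, n ⊗ₜ p ∈ LinearMap.range f) : Function.Surjective f := by
  rw [← LinearMap.range_eq_top, eq_top_iff, ← span_tmul_eq_top, Submodule.span_le]
  rintro _ ⟨n, p, rfl⟩
  exact h n p

section Bijectivity

variable {Δ : A →ₐ[ℂ] A ⊗[ℂ] A} {φ ψ : A →ₗ[ℂ] ℂ}

lemma T1_injective (hψ : IsRightIntegral Δ ψ) (hψf : IsFaithful ψ) :
    Function.Injective (T1 Δ) := by
  have key : ∀ d z, sliceL ψ (Δ d * T1 Δ z) = sliceL ψ ((d ⊗ₜ 1) * z) := by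
    intro d z
    induction z using TensorProduct.induction_on with
    | zero => simp
    | add y z hy hz => simp [mul_add, hy, hz]
    | tmul a b =>
      rw [T1_tmul, ← mul_assoc, ← map_mul, sliceL_mul_one_tmul, hψ.2]
      simp [Algebra.TensorProduct.tmul_mul_tmul]
  refine (injective_iff_map_eq_zero _).mpr fun z hz ↦ hψf.eq_zero_of_sliceL_mul_eq_zero fun d ↦ ?_
  rw [← key, hz, mul_zero, map_zero]

lemma T2_injective (hφ : IsLeftIntegral Δ φ) (hφf : IsFaithful φ) :
    Function.Injective (T2 Δ) := by
  have key : ∀ d z, sliceR φ (T2 Δ z * Δ d) = sliceR φ (z * (1 ⊗ₜ d)) := by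
    intro d z
    induction z using TensorProduct.induction_on with
    | zero => simp
    | add y z hy hz => simp [add_mul, hy, hz]
    | tmul a b =>
      rw [T2_tmul, mul_assoc, ← map_mul, sliceR_tmul_one_mul, hφ.2]
      simp [Algebra.TensorProduct.tmul_mul_tmul]
  refine (injective_iff_map_eq_zero _).mpr fun z hz ↦ hφf.eq_zero_of_sliceR_mul_eq_zero fun d ↦ ?_
  rw [← key, hz, zero_mul, map_zero]

lemma sliceR_comp_T1_surjective (hleft : leftLeg Δ = ⊤) (hφf : IsFaithful φ) :
    Function.Surjective (sliceR φ ∘ₗ T1 Δ) := by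
  rw [← LinearMap.range_eq_top, eq_top_iff, ← hleft, leftLeg, Submodule.span_le]
  rintro _ ⟨a, ω, rfl⟩
  obtain ⟨b, hb⟩ := hφf.exists_sliceR_eq_sliceR_mul ω (Δ a)
  exact ⟨a ⊗ₜ b, by simp [hb]⟩

lemma sliceL_comp_T2_surjective (hright : rightLeg Δ = ⊤) (hψf : IsFaithful ψ) :
    Function.Surjective (sliceL ψ ∘ₗ T2 Δ) := by
  rw [← LinearMap.range_eq_top, eq_top_iff, ← hright, rightLeg, Submodule.span_le]
  rintro _ ⟨a, ω, rfl⟩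
  obtain ⟨d, hd⟩ := hψf.exists_sliceL_eq_sliceL_mul ω (Δ a)
  exact ⟨d ⊗ₜ a, by simp [hd]⟩

lemma T1_surjective (hΔ : IsCoassoc Δ) (hleft : leftLeg Δ = ⊤) (hφ : IsLeftIntegral Δ φ)
    (hφf : IsFaithful φ) : Function.Surjective (T1 Δ) := by
  refine surjective_of_forall_tmul_mem_range _ fun a c ↦ ?_
  obtain ⟨z, rfl⟩ := sliceR_comp_T1_surjective hleft hφf a
  refine ⟨twistR Δ φ z * (1 ⊗ₜ c), ?_⟩
  rw [T1_mul_one_tmul, T1_twistR hΔ hφ, Algebra.TensorProduct.tmul_mul_tmul, one_mul, mul_one]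
  rfl

lemma T2_surjective (hΔ : IsCoassoc Δ) (hright : rightLeg Δ = ⊤) (hψ : IsRightIntegral Δ ψ)
    (hψf : IsFaithful ψ) : Function.Surjective (T2 Δ) := by
  refine surjective_of_forall_tmul_mem_range _ fun c a ↦ ?_
  obtain ⟨z, rfl⟩ := sliceL_comp_T2_surjective hright hψf a
  refine ⟨(c ⊗ₜ 1) * twistL Δ ψ z, ?_⟩
  rw [T2_tmul_one_mul, T2_twistL hΔ hψ, Algebra.TensorProduct.tmul_mul_tmul, one_mul, mul_one]
  rfl

lemma T1_bijective (hΔ : IsCoassoc Δ) (hfull : IsFull Δ) (hφ : IsLeftIntegral Δ φ)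
    (hφf : IsFaithful φ) (hψ : IsRightIntegral Δ ψ) (hψf : IsFaithful ψ) :
    Function.Bijective (T1 Δ) :=
  ⟨T1_injective hψ hψf, T1_surjective hΔ hfull.1 hφ hφf⟩

lemma T2_bijective (hΔ : IsCoassoc Δ) (hfull : IsFull Δ) (hφ : IsLeftIntegral Δ φ)
    (hφf : IsFaithful φ) (hψ : IsRightIntegral Δ ψ) (hψf : IsFaithful ψ) :
    Function.Bijective (T2 Δ) :=
  ⟨T2_injective hφ hφf, T2_surjective hΔ hfull.2 hψ hψf⟩

end Bijectivity

section Cop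

variable {Δ : A →ₐ[ℂ] A ⊗[ℂ] A} {φ ψ : A →ₗ[ℂ] ℂ}

variable (Δ) in
def cop : A →ₐ[ℂ] A ⊗[ℂ] A :=
  (Algebra.TensorProduct.comm ℂ A A).toAlgHom.comp Δ

@[simp]
lemma cop_apply (a : A) : cop Δ a = TensorProduct.comm ℂ A A (Δ a) := rfl

lemma isCoassoc_cop (hΔ : IsCoassoc Δ) : IsCoassoc (cop Δ) := by
  have h₁ : ∀ w : A ⊗[ℂ] A, map (cop Δ).toLinearMap LinearMap.id (TensorProduct.comm ℂ A A w) =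
      map (TensorProduct.comm ℂ A A).toLinearMap LinearMap.id
        (TensorProduct.comm ℂ A (A ⊗[ℂ] A) (map LinearMap.id Δ.toLinearMap w)) := by
    intro w
    induction w using TensorProduct.induction_on with
    | zero => simp
    | tmul u v => simp
    | add y z hy hz => simp [hy, hz]
  have h₂ : ∀ w : A ⊗[ℂ] A, map LinearMap.id (cop Δ).toLinearMap (TensorProduct.comm ℂ A A w) =
      map LinearMap.id (TensorProduct.comm ℂ A A).toLinearMap
        (TensorProduct.comm ℂ (A ⊗[ℂ] A) A (map Δ.toLinearMap LinearMap.id w)) := by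
    intro w
    induction w using TensorProduct.induction_on with
    | zero => simp
    | tmul u v => simp
    | add y z hy hz => simp [hy, hz]
  have h₃ : ∀ X : (A ⊗[ℂ] A) ⊗[ℂ] A,
      TensorProduct.assoc ℂ A A A (map (TensorProduct.comm ℂ A A).toLinearMap LinearMap.id
        (TensorProduct.comm ℂ A (A ⊗[ℂ] A) (TensorProduct.assoc ℂ A A A X))) =
      map LinearMap.id (TensorProduct.comm ℂ A A).toLinearMap
        (TensorProduct.comm ℂ (A ⊗[ℂ] A) A X) := by
    intro X
    induction X using TensorProduct.induction_on with
    | zero => simp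
    | add y z hy hz => simp [hy, hz]
    | tmul Y c =>
      induction Y using TensorProduct.induction_on with
      | zero => simp
      | tmul u v => simp
      | add y z hy hz => simp [add_tmul, hy, hz]
  intro a
  rw [cop_apply, h₁, h₂, ← hΔ a, h₃]

lemma isFull_cop (hfull : IsFull Δ) : IsFull (cop Δ) := by
  have hleft : leftLeg (cop Δ) = rightLeg Δ := by simp [leftLeg, rightLeg]
  have hright : rightLeg (cop Δ) = leftLeg Δ := by simp [leftLeg, rightLeg]
  exact ⟨hleft.trans hfull.2, hright.trans hfull.1⟩

lemma isRightIntegral_cop (hφ : IsLeftIntegral Δ φ) : IsRightIntegral (cop Δ) φ :=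
  ⟨hφ.1, fun a ↦ by simpa using hφ.2 a⟩

lemma isLeftIntegral_cop (hψ : IsRightIntegral Δ ψ) : IsLeftIntegral (cop Δ) ψ :=
  ⟨hψ.1, fun a ↦ by simpa using hψ.2 a⟩

lemma T1_cop : T1 (cop Δ) = (TensorProduct.comm ℂ A A).toLinearMap ∘ₗ T1' Δ := by
  refine TensorProduct.ext' fun a b ↦ ?_
  rw [LinearMap.comp_apply, T1_tmul, T1'_tmul, cop_apply]
  exact (map_mul (Algebra.TensorProduct.comm ℂ A A) (Δ a) (b ⊗ₜ 1)).symm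

lemma T2_cop : T2 (cop Δ) = (TensorProduct.comm ℂ A A).toLinearMap ∘ₗ T2' Δ := by
  refine TensorProduct.ext' fun a b ↦ ?_
  rw [LinearMap.comp_apply, T2_tmul, T2'_tmul, cop_apply]
  exact (map_mul (Algebra.TensorProduct.comm ℂ A A) (1 ⊗ₜ a) (Δ b)).symm

lemma T1'_bijective_iff : Function.Bijective (T1' Δ) ↔ Function.Bijective (T1 (cop Δ)) := by
  rw [T1_cop, LinearMap.coe_comp, LinearEquiv.coe_coe, EquivLike.comp_bijective]

lemma T2'_bijective_iff : Function.Bijective (T2' Δ) ↔ Function.Bijective (T2 (cop Δ)) := by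
  rw [T2_cop, LinearMap.coe_comp, LinearEquiv.coe_coe, EquivLike.comp_bijective]

end Cop

section Counit

def IsLeftCounit (Δ : A →ₐ[ℂ] A ⊗[ℂ] A) (ε : A →ₗ[ℂ] ℂ) : Prop :=
  ∀ a, sliceL ε (Δ a) = a

def IsRightCounit (Δ : A →ₐ[ℂ] A ⊗[ℂ] A) (ε : A →ₗ[ℂ] ℂ) : Prop :=
  ∀ a, sliceR ε (Δ a) = a

variable {Δ : A →ₐ[ℂ] A ⊗[ℂ] A} {φ ψ : A →ₗ[ℂ] ℂ}

lemma sliceL_rTensor (ε : A →ₗ[ℂ] ℂ) (f : A →ₗ[ℂ] A) (Y : A ⊗[ℂ] A) :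
    sliceL ε (f.rTensor A Y) = sliceL (ε ∘ₗ f) Y := by
  induction Y using TensorProduct.induction_on with
  | zero => simp
  | tmul u v => simp
  | add y z hy hz => simp [hy, hz]

lemma IsCoassoc.comul_sliceL_comul (hΔ : IsCoassoc Δ) (ω : A →ₗ[ℂ] ℂ) (x : A) :
    Δ (sliceL ω (Δ x)) = (sliceL ω ∘ₗ Δ.toLinearMap).rTensor A (Δ x) := by
  have h₁ : ∀ Y : A ⊗[ℂ] A, Δ (sliceL ω Y) =
      TensorProduct.lid ℂ (A ⊗[ℂ] A) (ω.rTensor (A ⊗[ℂ] A) (map LinearMap.id Δ.toLinearMap Y)) := by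
    intro Y
    induction Y using TensorProduct.induction_on with
    | zero => simp
    | tmul u v => simp
    | add y z hy hz => simp [hy, hz]
  have h₂ : ∀ X : (A ⊗[ℂ] A) ⊗[ℂ] A, TensorProduct.lid ℂ (A ⊗[ℂ] A)
      (ω.rTensor (A ⊗[ℂ] A) (TensorProduct.assoc ℂ A A A X)) = (sliceL ω).rTensor A X := by
    intro X
    induction X using TensorProduct.induction_on with
    | zero => simp
    | add y z hy hz => simp [hy, hz]
    | tmul Y c =>
      induction Y using TensorProduct.induction_on with
      | zero => simp
      | tmul u v => simp [TensorProduct.smul_tmul']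
      | add y z hy hz => simp [add_tmul, hy, hz]
  rw [h₁, ← hΔ, h₂, LinearMap.rTensor_comp_apply]
  rfl

lemma exists_comp_eq_of_surjective {K M N P : Type*} [Field K] [AddCommGroup M] [Module K M]
    [AddCommGroup N] [Module K N] [AddCommGroup P] [Module K P] {f : M →ₗ[K] N}
    (hf : Function.Surjective f) (g : M →ₗ[K] P) (hker : ∀ m, f m = 0 → g m = 0) :
    ∃ h : N →ₗ[K] P, ∀ m, h (f m) = g m := by
  obtain ⟨s, hs⟩ := f.exists_rightInverse_of_surjective (LinearMap.range_eq_top.mpr hf)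
  refine ⟨g ∘ₗ s, fun m ↦ ?_⟩
  have : f (s (f m) - m) = 0 := by rw [map_sub, ← LinearMap.comp_apply f s, hs]; simp
  simpa [sub_eq_zero] using hker _ this

/-- Since `T₂` is injective, `twistL` shows that `ψ ∘ m` vanishes on the kernel of
`(ψ ⊗ id) ∘ T₂`, so `ε` can be defined by `ε((ψ ⊗ id)(T₂ z)) = ψ(m z)`. -/
lemma exists_isLeftCounit (hΔ : IsCoassoc Δ) (hright : rightLeg Δ = ⊤)
    (hψ : IsRightIntegral Δ ψ) (hψf : IsFaithful ψ) (hT2 : Function.Injective (T2 Δ)) :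
    ∃ ε, IsLeftCounit Δ ε := by
  set L := sliceL ψ ∘ₗ T2 Δ
  have hL : Function.Surjective L := sliceL_comp_T2_surjective hright hψf
  have hone : (1 : A) ≠ 0 := by
    obtain ⟨a, ha⟩ := DFunLike.ne_iff.mp hψ.1
    have : Nontrivial A := nontrivial_of_ne a 0 (by rintro rfl; simp at ha)
    exact one_ne_zero
  have hker : ∀ z, L z = 0 → ψ (LinearMap.mul' ℂ A z) = 0 := by
    intro z hz
    have htwist : twistL Δ ψ z = 0 := hT2 (by
      rw [T2_twistL hΔ hψ, map_zero]
      exact (congrArg (1 ⊗ₜ ·) hz).trans (tmul_zero _ _))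
    have : ψ (LinearMap.mul' ℂ A z) • (1 : A) = 0 := by
      rw [← mul'_twistL hψ, htwist, map_zero]
    exact (smul_eq_zero.mp this).resolve_right hone
  obtain ⟨ε, hε⟩ := exists_comp_eq_of_surjective hL (ψ ∘ₗ LinearMap.mul' ℂ A) hker
  refine ⟨ε, fun a ↦ ?_⟩
  obtain ⟨z, rfl⟩ := hL a
  induction z using TensorProduct.induction_on with
  | zero => simp
  | add y z hy hz => simp only [map_add, hy, hz]
  | tmul d x =>
    have hLdx : ∀ y, L (d ⊗ₜ y) = sliceL (ψ ∘ₗ LinearMap.mulLeft ℂ d) (Δ y) := fun y ↦ by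
      simp [L, sliceL_tmul_one_mul]
    have hεd : ε ∘ₗ sliceL (ψ ∘ₗ LinearMap.mulLeft ℂ d) ∘ₗ Δ.toLinearMap =
        ψ ∘ₗ LinearMap.mulLeft ℂ d := by
      ext y
      simpa [← hLdx] using hε (d ⊗ₜ y)
    rw [hLdx, hΔ.comul_sliceL_comul, sliceL_rTensor, hεd]

lemma IsLeftCounit.eq_of_isRightCounit {ε ε' : A →ₗ[ℂ] ℂ} (hε : IsLeftCounit Δ ε)
    (hε' : IsRightCounit Δ ε') : ε = ε' :=
  LinearMap.ext fun a ↦ calc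
    ε a = ε (sliceR ε' (Δ a)) := by rw [hε']
    _ = ε' a := by rw [apply_sliceR, hε]

lemma exists_counit (hΔ : IsCoassoc Δ) (hfull : IsFull Δ)
    (hφ : IsLeftIntegral Δ φ) (hφf : IsFaithful φ) (hψ : IsRightIntegral Δ ψ) (hψf : IsFaithful ψ) :
    ∃ ε, IsLeftCounit Δ ε ∧ IsRightCounit Δ ε := by
  obtain ⟨ε, hε⟩ := exists_isLeftCounit hΔ hfull.2 hψ hψf (T2_injective hφ hφf)
  obtain ⟨ε', hε'⟩ := exists_isLeftCounit (isCoassoc_cop hΔ) (isFull_cop hfull).2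
    (isRightIntegral_cop hφ) hφf (T2_injective (isLeftIntegral_cop hψ) hψf)
  have hε'R : IsRightCounit Δ ε' := fun a ↦ by simpa using hε' a
  obtain rfl := hε.eq_of_isRightCounit hε'R
  exact ⟨ε, hε, hε'R⟩

end Counit

section Antipode

variable {Δ : A →ₐ[ℂ] A ⊗[ℂ] A}

lemma exists_left_antipode (hT1 : Function.Bijective (T1 Δ)) (ε : A →ₗ[ℂ] ℂ) :
    ∃ S : A →ₗ[ℂ] A, ∀ a, LinearMap.mul' ℂ A (map S LinearMap.id (Δ a)) = ε a • 1 := by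
  let E := LinearEquiv.ofBijective (T1 Δ) hT1
  have hE : ∀ w y, E.symm (w * (1 ⊗ₜ y)) = E.symm w * (1 ⊗ₜ y) := fun w y ↦
    E.symm_apply_eq.mpr (by simp [E, T1_mul_one_tmul])
  let S := sliceL ε ∘ₗ E.symm.toLinearMap ∘ₗ (TensorProduct.mk ℂ A A).flip 1
  have hS : ∀ z, LinearMap.mul' ℂ A (map S LinearMap.id z) = sliceL ε (E.symm z) := by
    intro z
    induction z using TensorProduct.induction_on with
    | zero => simp
    | add y z hy hz => simp only [map_add, hy, hz]
    | tmul x y =>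
      simp [S, ← sliceL_mul_one_tmul, ← hE, Algebra.TensorProduct.tmul_mul_tmul]
  refine ⟨S, fun a ↦ ?_⟩
  have hΔa : E.symm (Δ a) = a ⊗ₜ 1 :=
    E.symm_apply_eq.mpr (by simp [E, ← Algebra.TensorProduct.one_def])
  rw [hS, hΔa, sliceL_tmul]

lemma exists_right_antipode (hT2 : Function.Bijective (T2 Δ)) (ε : A →ₗ[ℂ] ℂ) :
    ∃ S : A →ₗ[ℂ] A, ∀ a, LinearMap.mul' ℂ A (map LinearMap.id S (Δ a)) = ε a • 1 := by
  let E := LinearEquiv.ofBijective (T2 Δ) hT2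
  have hE : ∀ c w, E.symm ((c ⊗ₜ 1) * w) = (c ⊗ₜ 1) * E.symm w := fun c w ↦
    E.symm_apply_eq.mpr (by simp [E, T2_tmul_one_mul])
  let S := sliceR ε ∘ₗ E.symm.toLinearMap ∘ₗ TensorProduct.mk ℂ A A 1
  have hS : ∀ z, LinearMap.mul' ℂ A (map LinearMap.id S z) = sliceR ε (E.symm z) := by
    intro z
    induction z using TensorProduct.induction_on with
    | zero => simp
    | add y z hy hz => simp only [map_add, hy, hz]
    | tmul x y =>
      simp [S, ← sliceR_tmul_one_mul, ← hE, Algebra.TensorProduct.tmul_mul_tmul]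
  refine ⟨S, fun a ↦ ?_⟩
  have hΔa : E.symm (Δ a) = 1 ⊗ₜ a :=
    E.symm_apply_eq.mpr (by simp [E, ← Algebra.TensorProduct.one_def])
  rw [hS, hΔa, sliceR_tmul]

variable (Δ) in
abbrev coalgebraOfCounit (hΔ : IsCoassoc Δ) (ε : A →ₗ[ℂ] ℂ) (hεL : IsLeftCounit Δ ε)
    (hεR : IsRightCounit Δ ε) : Coalgebra ℂ A where
  comul := Δ.toLinearMap
  counit := ε
  coassoc := LinearMap.ext hΔ
  rTensor_counit_comp_comul := LinearMap.ext fun a ↦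
    (TensorProduct.lid ℂ A).injective <| (hεL a).trans (by simp)
  lTensor_counit_comp_comul := LinearMap.ext fun a ↦
    (TensorProduct.rid ℂ A).injective <| (hεR a).trans (by simp)

/-- A left and a right convolution inverse of the identity coincide. -/
lemma exists_antipode (hΔ : IsCoassoc Δ) {ε : A →ₗ[ℂ] ℂ} (hεL : IsLeftCounit Δ ε)
    (hεR : IsRightCounit Δ ε) (hT1 : Function.Bijective (T1 Δ))
    (hT2 : Function.Bijective (T2 Δ)) :
    ∃ S : A →ₗ[ℂ] A, ∀ a, LinearMap.mul' ℂ A (map S LinearMap.id (Δ a)) = ε a • 1 ∧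
      LinearMap.mul' ℂ A (map LinearMap.id S (Δ a)) = ε a • 1 := by
  obtain ⟨S, hS⟩ := exists_left_antipode hT1 ε
  obtain ⟨S', hS'⟩ := exists_right_antipode hT2 ε
  let _ := coalgebraOfCounit Δ hΔ ε hεL hεR
  have hleft : WithConv.toConv S * WithConv.toConv LinearMap.id = 1 := by
    ext a
    simp only [LinearMap.convMul_apply, LinearMap.convOne_apply]
    exact (hS a).trans (Algebra.algebraMap_eq_smul_one _).symm
  have hright : WithConv.toConv LinearMap.id * WithConv.toConv S' = 1 := by
    ext a
    simp only [LinearMap.convMul_apply, LinearMap.convOne_apply]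
    exact (hS' a).trans (Algebra.algebraMap_eq_smul_one _).symm
  obtain rfl : S = S' := WithConv.toConv_injective (left_inv_eq_right_inv hleft hright)
  exact ⟨S, fun a ↦ ⟨hS a, hS' a⟩⟩

end Antipode

/-- Larson-Sweedler theorem (integral version): if `Δ` is full and there exist a faithful
left integral and a faithful right integral, then the four canonical maps are bijective and
`(A, Δ)` is a Hopf algebra: there are a counit `ε` and an antipode `S`. -/
theorem larson_sweedler_integrals
    (Δ : A →ₐ[ℂ] A ⊗[ℂ] A) (hΔ : IsCoassoc Δ) (hfull : IsFull Δ)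
    (φ : A →ₗ[ℂ] ℂ) (hφ : IsLeftIntegral Δ φ) (hφf : IsFaithful φ)
    (ψ : A →ₗ[ℂ] ℂ) (hψ : IsRightIntegral Δ ψ) (hψf : IsFaithful ψ) :
    (Function.Bijective (T1 Δ) ∧ Function.Bijective (T1' Δ) ∧
      Function.Bijective (T2 Δ) ∧ Function.Bijective (T2' Δ)) ∧
    ∃ (ε : A →ₗ[ℂ] ℂ) (S : A →ₗ[ℂ] A), ∀ a : A,
      sliceL ε (Δ a) = a ∧ sliceR ε (Δ a) = a ∧
      LinearMap.mul' ℂ A (TensorProduct.map S LinearMap.id (Δ a)) = ε a • (1 : A) ∧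
      LinearMap.mul' ℂ A (TensorProduct.map LinearMap.id S (Δ a)) = ε a • (1 : A) := by
  have hT1 := T1_bijective hΔ hfull hφ hφf hψ hψf
  have hT2 := T2_bijective hΔ hfull hφ hφf hψ hψf
  have hT1' : Function.Bijective (T1' Δ) := T1'_bijective_iff.mpr <|
    T1_bijective (isCoassoc_cop hΔ) (isFull_cop hfull) (isLeftIntegral_cop hψ) hψf
      (isRightIntegral_cop hφ) hφf
  have hT2' : Function.Bijective (T2' Δ) := T2'_bijective_iff.mpr <|
    T2_bijective (isCoassoc_cop hΔ) (isFull_cop hfull) (isLeftIntegral_cop hψ) hψf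
      (isRightIntegral_cop hφ) hφf
  obtain ⟨ε, hεL, hεR⟩ := exists_counit hΔ hfull hφ hφf hψ hψf
  obtain ⟨S, hS⟩ := exists_antipode hΔ hεL hεR hT1 hT2
  exact ⟨⟨hT1, hT1', hT2, hT2'⟩, ε, S, fun a ↦ ⟨hεL a, hεR a, hS a⟩⟩
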